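/- arXiv:1703.06867 — 5 statements merged into one kernel-verified Lean document; each statement's English description precedes it below -/
import Mathlib

section
/- For every zonoid Y in ℝ^N there exists a sequence of zonotopes Z_k, k ∈ ℕ, such that Z_k ⊇ Z_{k+1} ⊇ Y for all k and Z_k converges to Y in the Hausdorff metric as k → ∞. -/
open Filter Set MeasureTheory Metric
open scoped Topology Pointwise ENNReal NNReal

noncomputable section

/-- Euclidean space `ℝ^N`. -/
abbrev EucN (N : ℕ) := EuclideanSpace ℝ (Fin N)

/-- A function `f : ℝ^N → [0,∞)` is quasi-concave if it is nonnegative and every super-level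
set `{x : t ≤ f x}` for `t > 0` is either empty or a convex body (compact and convex). -/
def QuasiConcave {N : ℕ} (f : EucN N → ℝ) : Prop :=
  (∀ x, 0 ≤ f x) ∧
    ∀ t : ℝ, 0 < t →
      {x | t ≤ f x} = ∅ ∨ (IsCompact {x | t ≤ f x} ∧ Convex ℝ {x | t ≤ f x})

/-- A valuation on the space `C^N` of quasi-concave functions. -/
def IsValuationQC {N : ℕ} (μ : (EucN N → ℝ) → ℝ) : Prop :=
  μ 0 = 0 ∧
    ∀ f g : EucN N → ℝ, QuasiConcave f → QuasiConcave g → QuasiConcave (f ⊔ g) →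
      μ (f ⊔ g) + μ (f ⊓ g) = μ f + μ g

/-- Continuity of a valuation on `C^N`: convergence of values along pointwise monotone,
pointwise convergent sequences of quasi-concave functions. -/
def ContinuousVal {N : ℕ} (μ : (EucN N → ℝ) → ℝ) : Prop :=
  ∀ (F : ℕ → EucN N → ℝ) (f : EucN N → ℝ),
    (∀ i, QuasiConcave (F i)) → QuasiConcave f →
    ((∀ x, Monotone fun i => F i x) ∨ (∀ x, Antitone fun i => F i x)) →
    (∀ x, Tendsto (fun i => F i x) atTop (𝓝 (f x))) →
    Tendsto (fun i => μ (F i)) atTop (𝓝 (μ f))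

/-- Translation invariance of a valuation on `C^N`. -/
def TransInvVal {N : ℕ} (μ : (EucN N → ℝ) → ℝ) : Prop :=
  ∀ f : EucN N → ℝ, QuasiConcave f → ∀ x₀ : EucN N, μ (fun x => f (x - x₀)) = μ f

/-- `k`-homogeneity of a valuation on `C^N`: `μ (f(·/λ)) = λ^k μ(f)`. -/
def HomogVal {N : ℕ} (k : ℕ) (μ : (EucN N → ℝ) → ℝ) : Prop :=
  ∀ f : EucN N → ℝ, QuasiConcave f → ∀ l : ℝ, 0 < l →
    μ (fun x => f (l⁻¹ • x)) = l ^ k * μ f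

/-- Evenness of a valuation on `C^N`: `μ (f(-·)) = μ f`. -/
def EvenVal {N : ℕ} (μ : (EucN N → ℝ) → ℝ) : Prop :=
  ∀ f : EucN N → ℝ, QuasiConcave f → μ (fun x => f (-x)) = μ f

/-- A convex body of `ℝ^N`: a nonempty compact convex set. -/
def IsConvexBody {N : ℕ} (K : Set (EucN N)) : Prop :=
  K.Nonempty ∧ IsCompact K ∧ Convex ℝ K

/-- A valuation on the space `K^N` of convex bodies of `ℝ^N`. -/
def IsValuationBody {N : ℕ} (μ : Set (EucN N) → ℝ) : Prop :=
  μ ∅ = 0 ∧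
    ∀ K L : Set (EucN N), IsConvexBody K → IsConvexBody L → IsConvexBody (K ∪ L) →
      μ (K ∪ L) + μ (K ∩ L) = μ K + μ L

/-- A zonotope: a Minkowski sum of finitely many segments. -/
def IsZonotope {N : ℕ} (Z : Set (EucN N)) : Prop :=
  ∃ (m : ℕ) (a b : Fin m → EucN N), Z = ∑ i : Fin m, segment ℝ (a i) (b i)

/-- A zonoid: a convex body which is the limit, in the Hausdorff metric, of zonotopes. -/
def IsZonoid {N : ℕ} (Y : Set (EucN N)) : Prop :=
  IsConvexBody Y ∧
    ∃ Z : ℕ → Set (EucN N), (∀ k, IsZonotope (Z k)) ∧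
      Tendsto (fun k => hausdorffDist (Z k) Y) atTop (𝓝 0)

/-!
Choose zonotopes `Z k` with `δ(Z k, Y) ≤ 2⁻ᵏ` and thicken them by cubes `C r = [-r, r]ᴺ`, which
are zonotopes too: `W k = Z k + C (3 · 2⁻ᵏ)`. Since `B r ⊆ C r`, `C a + C b ⊆ C (a + b)` and
`C r ⊆ B (N r)`, passing from `Z (k + 1)` through `Y` to `Z k` enlarges the cube by
`2⁻ᵏ⁻¹ + 2⁻ᵏ`, which is exactly the drop `3 · 2⁻ᵏ - 3 · 2⁻ᵏ⁻¹` of its radius. Hence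
`W (k + 1) ⊆ W k`, `Y ⊆ W k` and `δ(W k, Y) ≤ (1 + 3N) 2⁻ᵏ`.
-/

section Cube

variable {E : Type*} [AddCommGroup E] [Module ℝ E]

theorem mem_segment_neg_smul_iff {c : ℝ} (hc : 0 ≤ c) (v y : E) :
    y ∈ segment ℝ (-(c • v)) (c • v) ↔ ∃ t : ℝ, |t| ≤ c ∧ t • v = y := by
  have hseg : segment ℝ (-(c • v)) (c • v) = (fun t : ℝ => t • v) '' Icc (-c) c := by
    rw [← segment_eq_Icc (by linarith), ← neg_smul]
    exact (image_segment ℝ (LinearMap.toSpanSingleton ℝ E v).toAffineMap (-c) c).symm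
  simp only [hseg, mem_image, mem_Icc, ← abs_le]

variable (ι : Type*) [Fintype ι] [DecidableEq ι]

def cube (c : ℝ) : Set (EuclideanSpace ℝ ι) :=
  ∑ i, segment ℝ (-(c • EuclideanSpace.single i 1)) (c • EuclideanSpace.single i 1)

variable {ι}

theorem mem_cube_iff {c : ℝ} (hc : 0 ≤ c) (x : EuclideanSpace ℝ ι) :
    x ∈ cube ι c ↔ ∀ i, |x i| ≤ c := by
  simp only [cube, Set.mem_fintype_sum, mem_segment_neg_smul_iff hc]
  constructor
  · rintro ⟨g, hg, rfl⟩ i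
    choose t ht hgt using hg
    simpa [← hgt, Pi.single_apply] using ht i
  · intro h
    refine ⟨fun i => x i • EuclideanSpace.single i 1, fun i => ⟨x i, h i, rfl⟩, ?_⟩
    simpa using (EuclideanSpace.basisFun ι ℝ).sum_repr x

theorem cube_add_cube_subset {a b : ℝ} (ha : 0 ≤ a) (hb : 0 ≤ b) :
    cube ι a + cube ι b ⊆ cube ι (a + b) := by
  rintro _ ⟨x, hx, y, hy, rfl⟩
  rw [mem_cube_iff (add_nonneg ha hb)]
  exact fun i => (abs_add_le _ _).trans
    (add_le_add ((mem_cube_iff ha x).1 hx i) ((mem_cube_iff hb y).1 hy i))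

theorem zero_mem_cube {c : ℝ} (hc : 0 ≤ c) : (0 : EuclideanSpace ℝ ι) ∈ cube ι c :=
  (mem_cube_iff hc 0).2 fun _ => by simpa using hc

theorem closedBall_subset_cube {c : ℝ} (hc : 0 ≤ c) : closedBall 0 c ⊆ cube ι c := fun x hx => by
  rw [mem_cube_iff hc]
  exact fun i => (PiLp.norm_apply_le x i).trans (mem_closedBall_zero_iff.1 hx)

theorem cube_subset_closedBall {c : ℝ} (hc : 0 ≤ c) :
    cube ι c ⊆ closedBall 0 (Fintype.card ι * c) := by
  intro x hx
  simp only [cube, Set.mem_fintype_sum, mem_segment_neg_smul_iff hc] at hx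
  obtain ⟨g, hg, rfl⟩ := hx
  choose t ht hgt using hg
  rw [mem_closedBall_zero_iff]
  calc ‖∑ i, g i‖ ≤ ∑ i, ‖g i‖ := norm_sum_le _ _
    _ ≤ ∑ _i : ι, c := Finset.sum_le_sum fun i _ => by simpa [← hgt, norm_smul] using ht i
    _ = Fintype.card ι * c := by simp

end Cube

section Hausdorff

variable {E : Type*} [SeminormedAddCommGroup E]

theorem subset_add_closedBall_of_hausdorffDist_le {s t : Set E} {δ : ℝ} (hs : IsCompact s)
    (hs' : s.Nonempty) (ht : Bornology.IsBounded t) (ht' : t.Nonempty)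
    (h : hausdorffDist t s ≤ δ) : t ⊆ s + closedBall 0 δ := by
  intro x hx
  obtain ⟨y, hy, hxy⟩ := hs.exists_infDist_eq_dist hs' x
  refine ⟨y, hy, x - y, ?_, add_sub_cancel _ _⟩
  rw [mem_closedBall_zero_iff, ← dist_eq_norm, ← hxy]
  exact (infDist_le_hausdorffDist_of_mem hx
    (hausdorffEDist_ne_top_of_nonempty_of_bounded ht' hs' ht hs.isBounded)).trans h

theorem hausdorffDist_le_of_subset_add_closedBall {s t : Set E} {r : ℝ} (hr : 0 ≤ r)
    (hts : t ⊆ s) (hst : s ⊆ t + closedBall 0 r) : hausdorffDist s t ≤ r := by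
  refine hausdorffDist_le_of_mem_dist hr (fun x hx => ?_) fun y hy => ⟨y, hts hy, by simpa using hr⟩
  obtain ⟨y, hy, z, hz, rfl⟩ := hst hx
  exact ⟨y, hy, by simpa [dist_eq_norm] using hz⟩

end Hausdorff

section Zonotope

variable {N : ℕ}

theorem IsZonotope.isCompact {Z : Set (EucN N)} (hZ : IsZonotope Z) : IsCompact Z := by
  obtain ⟨m, a, b, rfl⟩ := hZ
  refine Finset.sum_induction _ IsCompact (fun _ _ => IsCompact.add) isCompact_singleton
    fun i _ => ?_
  rw [segment_eq_image]
  exact isCompact_Icc.image (by fun_prop)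

theorem IsZonotope.nonempty {Z : Set (EucN N)} (hZ : IsZonotope Z) : Z.Nonempty := by
  obtain ⟨m, a, b, rfl⟩ := hZ
  exact Finset.sum_induction _ Set.Nonempty (fun _ _ => Set.Nonempty.add) zero_nonempty
    fun i _ => ⟨a i, left_mem_segment ℝ _ _⟩

theorem IsZonotope.add {Z W : Set (EucN N)} (hZ : IsZonotope Z) (hW : IsZonotope W) :
    IsZonotope (Z + W) := by
  obtain ⟨m, a, b, rfl⟩ := hZ
  obtain ⟨n, a', b', rfl⟩ := hW
  refine ⟨m + n, Fin.append a a', Fin.append b b', ?_⟩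
  simp [Fin.sum_univ_add]

theorem isZonotope_cube (c : ℝ) : IsZonotope (cube (Fin N) c) :=
  ⟨N, _, _, rfl⟩

end Zonotope

section CubeNeighbourhood

variable {ι : Type*} [Fintype ι] [DecidableEq ι] {K L : Set (EuclideanSpace ℝ ι)} {a b : ℝ}

theorem add_cube_subset_add_cube (ha : 0 ≤ a) (hb : 0 ≤ b) (h : K ⊆ L + closedBall 0 a) :
    K + cube ι b ⊆ L + cube ι (a + b) :=
  calc K + cube ι b ⊆ L + cube ι a + cube ι b :=
        add_subset_add_right (h.trans (add_subset_add_left (closedBall_subset_cube ha)))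
    _ = L + (cube ι a + cube ι b) := add_assoc _ _ _
    _ ⊆ L + cube ι (a + b) := add_subset_add_left (cube_add_cube_subset ha hb)

theorem add_cube_subset_add_closedBall (ha : 0 ≤ a) (hb : 0 ≤ b) (h : K ⊆ L + closedBall 0 a) :
    K + cube ι b ⊆ L + closedBall 0 (a + Fintype.card ι * b) :=
  calc K + cube ι b ⊆ L + closedBall 0 a + closedBall 0 (Fintype.card ι * b) :=
        add_subset_add h (cube_subset_closedBall hb)
    _ = L + closedBall 0 (a + Fintype.card ι * b) := by
      rw [add_assoc, closedBall_add_closedBall ha (by positivity), add_zero]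

end CubeNeighbourhood

theorem IsZonoid.exists_zonotope_subset_add_closedBall {N : ℕ} {Y : Set (EucN N)}
    (hY : IsZonoid Y) {ε : ℕ → ℝ} (hε : ∀ k, 0 < ε k) :
    ∃ Z : ℕ → Set (EucN N), (∀ k, IsZonotope (Z k)) ∧
      ∀ k, Z k ⊆ Y + closedBall 0 (ε k) ∧ Y ⊆ Z k + closedBall 0 (ε k) := by
  obtain ⟨⟨hYne, hYcpt, -⟩, Z, hZ, hlim⟩ := hY
  choose n hn using fun k => (hlim.eventually (Iic_mem_nhds (hε k))).exists
  exact ⟨fun k => Z (n k), fun k => hZ _, fun k =>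
    ⟨subset_add_closedBall_of_hausdorffDist_le hYcpt hYne (hZ _).isCompact.isBounded
      (hZ _).nonempty (hn k),
    subset_add_closedBall_of_hausdorffDist_le (hZ _).isCompact (hZ _).nonempty
      hYcpt.isBounded hYne (hausdorffDist_comm.trans_le (hn k))⟩⟩

/-- Every zonoid is the limit in the Hausdorff metric of a decreasing
sequence of zonotopes all containing it. -/
theorem zonoid_decreasing_zonotope_approx {N : ℕ} (Y : Set (EucN N)) (hY : IsZonoid Y) :
    ∃ Z : ℕ → Set (EucN N), (∀ k, IsZonotope (Z k)) ∧
      (∀ k, Z (k + 1) ⊆ Z k ∧ Y ⊆ Z k) ∧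
      Tendsto (fun k => hausdorffDist (Z k) Y) atTop (𝓝 0) := by
  set ε : ℕ → ℝ := fun k => (1 / 2) ^ k with hε
  have hε₀ (k : ℕ) : 0 ≤ ε k := by positivity
  obtain ⟨Z, hZ, hclose⟩ :=
    hY.exists_zonotope_subset_add_closedBall (ε := ε) fun k => pow_pos one_half_pos k
  have hYW (k : ℕ) : Y ⊆ Z k + cube (Fin N) (3 * ε k) :=
    calc Y ⊆ Y + cube (Fin N) (2 * ε k) := subset_add_left _ (zero_mem_cube (by positivity))
      _ ⊆ Z k + cube (Fin N) (ε k + 2 * ε k) :=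
        add_cube_subset_add_cube (hε₀ k) (by positivity) (hclose k).2
      _ = Z k + cube (Fin N) (3 * ε k) := by ring_nf
  refine ⟨fun k => Z k + cube (Fin N) (3 * ε k), fun k => (hZ k).add (isZonotope_cube _),
    fun k => ⟨?_, hYW k⟩, ?_⟩
  · calc Z (k + 1) + cube (Fin N) (3 * ε (k + 1))
        ⊆ Y + cube (Fin N) (ε (k + 1) + 3 * ε (k + 1)) :=
          add_cube_subset_add_cube (hε₀ _) (by positivity) (hclose (k + 1)).1
      _ ⊆ Z k + cube (Fin N) (ε k + (ε (k + 1) + 3 * ε (k + 1))) :=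
          add_cube_subset_add_cube (hε₀ _) (by positivity) (hclose k).2
      _ = Z k + cube (Fin N) (3 * ε k) := by simp only [hε, pow_succ]; ring_nf
  · refine squeeze_zero (fun _ => hausdorffDist_nonneg) (fun k =>
      hausdorffDist_le_of_subset_add_closedBall (by positivity) (hYW k)
        (add_cube_subset_add_closedBall (hε₀ k) (by positivity) (hclose k).1)) ?_
    convert (tendsto_pow_atTop_nhds_zero_of_lt_one one_half_pos.le one_half_lt_one).const_mul
      (1 + 3 * N : ℝ) using 2 with k
    · simp only [hε, Fintype.card_fin]; ring
    · rw [mul_zero]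
end
end

section
/- Let μ : C^N → ℝ be a continuous valuation on the space C^N of quasi-concave functions. If μ(t·I_P) = 0 for every t > 0 and every polytope P ⊂ ℝ^N, then μ(f) = 0 for every f ∈ C^N. -/
open Filter Set MeasureTheory Metric
open scoped Topology Pointwise ENNReal NNReal

noncomputable section

/-- A polytope: the convex hull of finitely many points of `ℝ^N`. -/
def IsPolytope {N : ℕ} (P : Set (EucN N)) : Prop :=
  ∃ s : Finset (EucN N), s.Nonempty ∧ P = convexHull ℝ (s : Set (EucN N))

/-!
Every convex body `K` is the intersection of a decreasing sequence of polytopes, so continuity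
along decreasing sequences carries the vanishing from `t • I_P` over to `t • I_K`.
If a quasi-concave `g` takes values in `{0, c, …, (m + 1) c}` and `K = {g ≥ (m + 1) c}`, then
`g = min(g, m c) ∨ (m + 1) c • I_K` and `min(g, m c) ∧ (m + 1) c • I_K = m c • I_K`, so the
valuation identity gives `μ g = μ (min(g, m c))`; by induction `μ` vanishes on such step
functions. The dyadic truncations `⌊2ⁿ f⌋ / 2ⁿ` of a quasi-concave `f` are quasi-concave step
functions increasing to `f`, and continuity gives `μ f = 0`.
-/

section ConvexApprox

variable {E : Type*} [NormedAddCommGroup E] [NormedSpace ℝ E] [FiniteDimensional ℝ E]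

theorem Convex.exists_antitone_convexHull_finset_iInter_eq {K : Set E} (hKc : Convex ℝ K)
    (hK : IsCompact K) :
    ∃ u : ℕ → Finset E, Antitone (fun n => convexHull ℝ (u n : Set E)) ∧
      ⋂ n, convexHull ℝ (u n : Set E) = K := by
  have step : ∀ U : Set E, IsOpen U → K ⊆ U →
      ∃ u : Finset E, K ⊆ interior (convexHull ℝ (u : Set E)) ∧ convexHull ℝ (u : Set E) ⊆ U :=
    fun U hU hKU => hKc.exists_subset_interior_convexHull_finset_of_isCompact hK
      (hU.mem_nhdsSet.2 hKU)
  choose! next hnext_int hnext_sub using step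
  obtain ⟨u, hu_zero, hu_succ⟩ : ∃ u : ℕ → Finset E, u 0 = next (Metric.thickening 1 K) ∧
      ∀ n : ℕ, u (n + 1) =
        next (interior (convexHull ℝ (u n : Set E)) ∩ Metric.thickening (1 / (n + 2)) K) :=
    ⟨fun n => Nat.rec (motive := fun _ => Finset E) (next (Metric.thickening 1 K))
      (fun n v => next (interior (convexHull ℝ (v : Set E)) ∩ Metric.thickening (1 / (n + 2)) K)) n,
      rfl, fun _ => rfl⟩
  have hstep : ∀ n, K ⊆ interior (convexHull ℝ (u n : Set E)) →
      K ⊆ interior (convexHull ℝ (u (n + 1) : Set E)) ∧ convexHull ℝ (u (n + 1) : Set E) ⊆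
        interior (convexHull ℝ (u n : Set E)) ∩ Metric.thickening (1 / ((n : ℝ) + 2)) K := by
    intro n hKn
    have hU : IsOpen (interior (convexHull ℝ (u n : Set E)) ∩
        Metric.thickening (1 / ((n : ℝ) + 2)) K) :=
      isOpen_interior.inter Metric.isOpen_thickening
    have hKU := subset_inter hKn
      (Metric.self_subset_thickening (by positivity : (0 : ℝ) < 1 / ((n : ℝ) + 2)) K)
    rw [hu_succ]
    exact ⟨hnext_int _ hU hKU, hnext_sub _ hU hKU⟩
  have hu : ∀ n, K ⊆ interior (convexHull ℝ (u n : Set E)) ∧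
      convexHull ℝ (u n : Set E) ⊆ Metric.thickening (1 / ((n : ℝ) + 1)) K := by
    intro n
    induction n with
    | zero =>
      have hK1 := Metric.self_subset_thickening one_pos K
      rw [hu_zero, Nat.cast_zero, zero_add, div_one]
      exact ⟨hnext_int _ Metric.isOpen_thickening hK1, hnext_sub _ Metric.isOpen_thickening hK1⟩
    | succ n ih =>
      rw [Nat.cast_succ, add_assoc, one_add_one_eq_two]
      exact ⟨(hstep n ih.1).1, (hstep n ih.1).2.trans inter_subset_right⟩
  refine ⟨u, antitone_nat_of_succ_le fun n =>
    (hstep n (hu n).1).2.trans (inter_subset_left.trans interior_subset), ?_⟩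
  refine subset_antisymm ?_ (subset_iInter fun n => (hu n).1.trans interior_subset)
  rw [← hK.isClosed.closure_eq, Metric.closure_eq_iInter_thickening]
  refine subset_iInter₂ fun δ hδ => ?_
  obtain ⟨n, hn⟩ := exists_nat_one_div_lt hδ
  exact (iInter_subset _ n).trans ((hu n).2.trans (Metric.thickening_mono hn.le K))

end ConvexApprox

section QuasiConcave

variable {N : ℕ} {f : EucN N → ℝ}

theorem QuasiConcave.isCompact_setOf_le (hf : QuasiConcave f) {t : ℝ} (ht : 0 < t) :
    IsCompact {x | t ≤ f x} :=
  (hf.2 t ht).elim (fun h => h ▸ isCompact_empty) And.left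

theorem QuasiConcave.convex_setOf_le (hf : QuasiConcave f) {t : ℝ} (ht : 0 < t) :
    Convex ℝ {x | t ≤ f x} :=
  (hf.2 t ht).elim (fun h => h ▸ convex_empty) And.right

theorem QuasiConcave.upperSemicontinuous (hf : QuasiConcave f) : UpperSemicontinuous f := by
  refine upperSemicontinuous_iff_isClosed_preimage.2 fun t => ?_
  rcases le_or_gt t 0 with ht | ht
  · convert isClosed_univ
    exact eq_univ_of_forall fun x => ht.trans (hf.1 x)
  · exact (hf.isCompact_setOf_le ht).isClosed

theorem QuasiConcave.bddAbove_range (hf : QuasiConcave f) : BddAbove (range f) := by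
  obtain ⟨M, hM⟩ := (hf.upperSemicontinuous.upperSemicontinuousOn _).bddAbove_of_isCompact
    (hf.isCompact_setOf_le one_pos)
  refine ⟨max 1 M, forall_mem_range.2 fun x => ?_⟩
  rcases le_or_gt 1 (f x) with hx | hx
  · exact le_max_of_le_right (hM ⟨x, hx, rfl⟩)
  · exact le_max_of_le_left hx.le

theorem quasiConcave_indicator_const {K : Set (EucN N)} (hK : IsCompact K) (hKc : Convex ℝ K)
    {t : ℝ} (ht : 0 ≤ t) : QuasiConcave (K.indicator fun _ => t) := by
  refine ⟨indicator_nonneg fun _ _ => ht, fun s hs => ?_⟩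
  rcases le_or_gt s t with hst | hst
  · have hlevel : {x | s ≤ K.indicator (fun _ => t) x} = K := by
      ext x
      by_cases hx : x ∈ K <;> simp [hx, hst, hs.not_ge]
    rw [hlevel]
    exact K.eq_empty_or_nonempty.imp_right fun _ => ⟨hK, hKc⟩
  · left
    ext x
    by_cases hx : x ∈ K <;> simp [hx, hst.not_ge, (ht.trans_lt hst).not_ge]

theorem QuasiConcave.inf_const (hf : QuasiConcave f) {s : ℝ} (hs : 0 ≤ s) :
    QuasiConcave (f ⊓ fun _ => s) := by
  refine ⟨fun x => le_min (hf.1 x) hs, fun t ht => ?_⟩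
  rcases le_or_gt t s with hts | hts
  · have hlevel : {x | t ≤ (f ⊓ fun _ => s) x} = {x | t ≤ f x} := by
      ext x
      simp [hts]
    exact hlevel ▸ hf.2 t ht
  · left
    ext x
    simp [hts]

end QuasiConcave

def dyadicFloor (n : ℕ) (a : ℝ) : ℝ := ⌊a * 2 ^ n⌋₊ / 2 ^ n

theorem dyadicFloor_le {a : ℝ} (ha : 0 ≤ a) (n : ℕ) : dyadicFloor n a ≤ a :=
  div_le_of_le_mul₀ (by positivity) ha (Nat.floor_le (by positivity))

theorem sub_inv_pow_lt_dyadicFloor (a : ℝ) (n : ℕ) : a - (2 ^ n)⁻¹ < dyadicFloor n a := by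
  rw [dyadicFloor, lt_div_iff₀ (by positivity), sub_mul, inv_mul_cancel₀ (by positivity)]
  linarith [Nat.lt_floor_add_one (a * 2 ^ n)]

theorem monotone_dyadicFloor {a : ℝ} (ha : 0 ≤ a) : Monotone fun n => dyadicFloor n a := by
  refine monotone_nat_of_le_succ fun n => ?_
  have hfloor : (⌊a * 2 ^ n⌋₊ * 2 : ℕ) ≤ ⌊a * 2 ^ n * 2⌋₊ := by
    refine Nat.le_floor ?_
    push_cast
    gcongr
    exact Nat.floor_le (by positivity)
  rw [dyadicFloor, dyadicFloor, div_le_div_iff₀ (by positivity) (by positivity), pow_succ,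
    ← mul_assoc a]
  calc (⌊a * 2 ^ n⌋₊ : ℝ) * (2 ^ n * 2) = ((⌊a * 2 ^ n⌋₊ * 2 : ℕ) : ℝ) * 2 ^ n := by
        push_cast; ring
    _ ≤ ⌊a * 2 ^ n * 2⌋₊ * 2 ^ n := by gcongr

theorem tendsto_dyadicFloor {a : ℝ} (ha : 0 ≤ a) :
    Tendsto (fun n => dyadicFloor n a) atTop (𝓝 a) := by
  refine tendsto_of_tendsto_of_tendsto_of_le_of_le ?_ tendsto_const_nhds
    (fun n => (sub_inv_pow_lt_dyadicFloor a n).le) (dyadicFloor_le ha)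
  simpa using tendsto_const_nhds.sub (tendsto_inv_atTop_zero.comp
    (tendsto_pow_atTop_atTop_of_one_lt (one_lt_two (α := ℝ))))

theorem le_dyadicFloor_iff {a t : ℝ} (ha : 0 ≤ a) (n : ℕ) :
    t ≤ dyadicFloor n a ↔ ⌈t * 2 ^ n⌉₊ / 2 ^ n ≤ a := by
  rw [dyadicFloor, le_div_iff₀ (by positivity), div_le_iff₀ (by positivity), ← Nat.ceil_le,
    Nat.le_floor_iff (by positivity)]

theorem QuasiConcave.dyadicFloor {N : ℕ} {f : EucN N → ℝ} (hf : QuasiConcave f) (n : ℕ) :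
    QuasiConcave fun x => dyadicFloor n (f x) := by
  refine ⟨fun x => by unfold _root_.dyadicFloor; positivity, fun t ht => ?_⟩
  have hlevel : {x | t ≤ _root_.dyadicFloor n (f x)} = {x | ⌈t * 2 ^ n⌉₊ / 2 ^ n ≤ f x} := by
    ext x
    exact le_dyadicFloor_iff (hf.1 x) n
  rw [hlevel]
  exact hf.2 _ (div_pos (Nat.cast_pos.2 (Nat.ceil_pos.2 (by positivity))) (by positivity))

section Valuation

variable {N : ℕ} {μ : (EucN N → ℝ) → ℝ}

theorem ContinuousVal.map_indicator_eq_zero_of_isCompact_of_convex (hcont : ContinuousVal μ)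
    (h0 : μ 0 = 0)
    (hP : ∀ t : ℝ, 0 < t → ∀ P : Set (EucN N), IsPolytope P →
      μ (Set.indicator P fun _ => t) = 0)
    {K : Set (EucN N)} (hK : IsCompact K) (hKc : Convex ℝ K) {t : ℝ} (ht : 0 < t) :
    μ (K.indicator fun _ => t) = 0 := by
  rcases K.eq_empty_or_nonempty with rfl | hne
  · rw [indicator_empty]
    exact h0
  obtain ⟨u, hanti, hinter⟩ := hKc.exists_antitone_convexHull_finset_iInter_eq hK
  set P := fun n => convexHull ℝ (u n : Set (EucN N))
  have hpoly : ∀ n, IsPolytope (P n) := fun n =>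
    ⟨u n, Finset.coe_nonempty.1 <| (convexHull_nonempty_iff (𝕜 := ℝ)).1 <|
      hne.mono (hinter ▸ iInter_subset P n), rfl⟩
  have hlim := hcont (fun n => (P n).indicator fun _ => t) _
    (fun n => quasiConcave_indicator_const ((u n).finite_toSet.isCompact_convexHull (𝕜 := ℝ))
      (convex_convexHull ℝ _) ht.le)
    (quasiConcave_indicator_const hK hKc ht.le)
    (Or.inr fun x _ _ hnm => indicator_le_indicator_of_subset (hanti hnm) (fun _ => ht.le) x)
    (fun x => hinter ▸ (hanti.tendsto_indicator _ _ x).mono_right (pure_le_nhds _))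
  simp only [hP t ht _ (hpoly _)] at hlim
  exact (tendsto_nhds_unique tendsto_const_nhds hlim).symm

theorem IsValuationQC.map_eq_map_inf_const (hval : IsValuationQC μ)
    (hbody : ∀ K : Set (EucN N), IsCompact K → Convex ℝ K → ∀ t : ℝ, 0 < t →
      μ (K.indicator fun _ => t) = 0)
    {f : EucN N → ℝ} (hf : QuasiConcave f) {s t : ℝ}
    (hs : 0 ≤ s) (hst : s < t) (hft : ∀ x, f x ≤ s ∨ f x = t) :
    μ f = μ (f ⊓ fun _ => s) := by
  set K := {x | t ≤ f x}
  have ht : 0 < t := hs.trans_lt hst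
  have hK := hf.isCompact_setOf_le ht
  have hKc := hf.convex_setOf_le ht
  have hlattice : (f ⊓ fun _ => s) ⊔ K.indicator (fun _ => t) = f ∧
      (f ⊓ fun _ => s) ⊓ K.indicator (fun _ => t) = K.indicator fun _ => s := by
    simp only [funext_iff, Pi.sup_apply, Pi.inf_apply, ← forall_and]
    intro x
    by_cases hx : x ∈ K
    · have hfx : f x = t := (hft x).resolve_left fun h => (h.trans_lt hst).not_ge hx
      simp [indicator_of_mem hx, hfx, hst.le]
    · have hfx : f x ≤ s := (hft x).resolve_right fun h => hx h.ge
      simp [indicator_of_notMem hx, hfx, hf.1 x]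
  have hmod := hval.2 _ _ (hf.inf_const hs) (quasiConcave_indicator_const hK hKc ht.le)
    (by rwa [hlattice.1])
  have hKs : μ (K.indicator fun _ => s) = 0 := by
    rcases hs.eq_or_lt with rfl | hs
    · rw [indicator_zero]
      exact hval.1
    · exact hbody K hK hKc s hs
  rw [hlattice.1, hlattice.2, hKs, hbody K hK hKc t ht] at hmod
  linarith

theorem IsValuationQC.map_eq_zero_of_forall_eq_nat_mul (hval : IsValuationQC μ)
    (hbody : ∀ K : Set (EucN N), IsCompact K → Convex ℝ K → ∀ t : ℝ, 0 < t →
      μ (K.indicator fun _ => t) = 0)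
    {f : EucN N → ℝ} (hf : QuasiConcave f)
    {c : ℝ} (hc : 0 < c) (hfc : ∀ x, ∃ j : ℕ, f x = j * c) : μ f = 0 := by
  suffices h : ∀ (m : ℕ) (f : EucN N → ℝ), QuasiConcave f → (∀ x, ∃ j : ℕ, f x = j * c) →
      (∀ x, f x ≤ m * c) → μ f = 0 by
    obtain ⟨M, hM⟩ := hf.bddAbove_range
    refine h ⌈M / c⌉₊ f hf hfc fun x => ?_
    calc f x ≤ M := hM (mem_range_self x)
      _ ≤ ⌈M / c⌉₊ * c := (div_le_iff₀ hc).1 (Nat.le_ceil _)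
  intro m
  induction m with
  | zero =>
    intro f hf _ hfm
    rw [show f = 0 from funext fun x => le_antisymm (by simpa using hfm x) (hf.1 x)]
    exact hval.1
  | succ m ih =>
    intro f hf hfc hfm
    have hft : ∀ x, f x ≤ m * c ∨ f x = (m + 1) * c := by
      intro x
      obtain ⟨j, hj⟩ := hfc x
      have hjm : j ≤ m + 1 := by
        exact_mod_cast le_of_mul_le_mul_right (hj ▸ hfm x) hc
      obtain hjm | rfl := Nat.le_succ_iff.1 hjm
      · left
        rw [hj]
        gcongr
      · right
        rw [hj]
        push_cast
        ring
    rw [hval.map_eq_map_inf_const hbody hf (by positivity) (by gcongr; linarith) hft]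
    refine ih _ (hf.inf_const (by positivity)) (fun x => ?_) fun x => min_le_right _ _
    obtain ⟨j, hj⟩ := hfc x
    exact ⟨min j m, by rw [Pi.inf_apply, hj, Nat.cast_min, min_mul_of_nonneg _ _ hc.le]⟩

end Valuation

/-- Proposition 4.4. A continuous valuation on `C^N` vanishing on all
functions `t·I_P`, `t > 0`, `P` a polytope, vanishes identically on `C^N`. -/
theorem vanishing_on_polytope_indicators {N : ℕ} (μ : (EucN N → ℝ) → ℝ)
    (hval : IsValuationQC μ) (hcont : ContinuousVal μ)
    (hP : ∀ t : ℝ, 0 < t → ∀ P : Set (EucN N), IsPolytope P →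
      μ (Set.indicator P fun _ => t) = 0) :
    ∀ f : EucN N → ℝ, QuasiConcave f → μ f = 0 := by
  intro f hf
  have hbody : ∀ K : Set (EucN N), IsCompact K → Convex ℝ K → ∀ t : ℝ, 0 < t →
      μ (K.indicator fun _ => t) = 0 :=
    fun K hK hKc t ht => hcont.map_indicator_eq_zero_of_isCompact_of_convex hval.1 hP hK hKc ht
  have hdyadic : ∀ n, μ (fun x => dyadicFloor n (f x)) = 0 := fun n =>
    hval.map_eq_zero_of_forall_eq_nat_mul hbody (hf.dyadicFloor n) (c := (2 ^ n)⁻¹)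
      (by positivity) fun x => ⟨_, div_eq_mul_inv _ _⟩
  have hlim := hcont _ f hf.dyadicFloor hf (Or.inl fun x => monotone_dyadicFloor (hf.1 x))
    fun x => tendsto_dyadicFloor (hf.1 x)
  simp only [hdyadic] at hlim
  exact (tendsto_nhds_unique tendsto_const_nhds hlim).symm
end
end

section
/- Let μ : C^N → ℝ be a continuous, translation invariant and 0-homogeneous valuation on the space C^N of quasi-concave functions. Then there exists a continuous function φ : [0,∞) → ℝ with φ(0) = 0 such that μ(f) = φ(max_{ℝ^N} f) for every f ∈ C^N. -/
open Filter Set MeasureTheory Metric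
open scoped Topology Pointwise ENNReal NNReal

noncomputable section

/-!
The super-level sets of a quasi-concave function `f` at positive heights are compact, so `f`
attains its maximum, and after a translation we may assume it does so at the origin. Then the
zoomed-out functions `x ↦ f ((n + 1) • x)` all have the same `μ`-value by `0`-homogeneity, and
they decrease pointwise to the function equal to `max f` at the origin and `0` elsewhere.
Continuity of `μ` therefore gives `μ f = μ (Pi.single 0 (max f))`, so `φ t = μ (Pi.single 0 t)`
works. Its continuity is again continuity of `μ`, tested along monotone sequences of heights.
-/

lemma continuous_of_tendsto_comp_of_monotone_or_antitone {α X : Type*} [TopologicalSpace α]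
    [FirstCountableTopology α] [LinearOrder α] [TopologicalSpace X] {φ : α → X}
    (h : ∀ u : ℕ → α, (Monotone u ∨ Antitone u) → ∀ t, Tendsto u atTop (𝓝 t) →
      Tendsto (φ ∘ u) atTop (𝓝 (φ t))) :
    Continuous φ := by
  refine continuous_iff_continuousAt.2 fun t => tendsto_iff_seq_tendsto.2 fun u hu =>
    tendsto_of_subseq_tendsto fun ns hns => ?_
  obtain ⟨g, hg⟩ := exists_increasing_or_nonincreasing_subseq (· ≤ ·) (u ∘ ns)
  refine ⟨g, h (u ∘ ns ∘ g) ?_ t ((hu.comp hns).comp g.strictMono.tendsto_atTop)⟩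
  rcases hg with hg | hg
  · exact Or.inl (monotone_iff_forall_lt.2 hg)
  · exact Or.inr (antitone_iff_forall_lt.2 fun m n hmn => (not_le.1 (hg m n hmn)).le)

lemma quasiConcave_single {N : ℕ} [DecidableEq (EucN N)] (x₀ : EucN N) {M : ℝ} (hM : 0 ≤ M) :
    QuasiConcave (Pi.single x₀ M) := by
  refine ⟨fun x => ?_, fun t ht => ?_⟩
  · rcases eq_or_ne x x₀ with rfl | hx
    · simpa using hM
    · simp [hx]
  rcases le_or_gt t M with htM | htM
  · have : {x | t ≤ (Pi.single x₀ M : EucN N → ℝ) x} = {x₀} := by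
      ext x
      rcases eq_or_ne x x₀ with rfl | hx
      · simpa using htM
      · simpa [Pi.single_apply, hx] using ht
    rw [this]
    exact Or.inr ⟨isCompact_singleton, convex_singleton x₀⟩
  · refine Or.inl (eq_empty_of_forall_notMem fun x hx => ?_)
    rcases eq_or_ne x x₀ with rfl | hx'
    · exact (not_le.2 htM) (by simpa using hx)
    · exact (not_le.2 ht) (by simpa [Pi.single_apply, hx'] using hx)

namespace QuasiConcave

variable {N : ℕ} {f : EucN N → ℝ}

lemma isCompact_setOf_le_s10 (hf : QuasiConcave f) {t : ℝ} (ht : 0 < t) :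
    IsCompact {x | t ≤ f x} := by
  rcases hf.2 t ht with h | h
  · rw [h]
    exact isCompact_empty
  · exact h.1

lemma convex_setOf_le_s10 (hf : QuasiConcave f) {t : ℝ} (ht : 0 < t) :
    Convex ℝ {x | t ≤ f x} := by
  rcases hf.2 t ht with h | h
  · rw [h]
    exact convex_empty
  · exact h.2

lemma comp_affineEquiv (hf : QuasiConcave f) (e : EucN N ≃ᵃ[ℝ] EucN N) :
    QuasiConcave (f ∘ e) := by
  refine ⟨fun x => hf.1 (e x), fun t ht => Or.inr ⟨?_, ?_⟩⟩
  · exact e.toContinuousAffineEquiv.toHomeomorph.isCompact_preimage.2 (hf.isCompact_setOf_le_s10 ht)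
  · exact (hf.convex_setOf_le_s10 ht).affine_preimage e.toAffineMap

lemma min_le_of_mem_segment (hf : QuasiConcave f) {x y z : EucN N}
    (hz : z ∈ segment ℝ x y) : min (f x) (f y) ≤ f z := by
  rcases le_or_gt (min (f x) (f y)) 0 with h | h
  · exact h.trans (hf.1 z)
  · exact (hf.convex_setOf_le_s10 h).segment_subset (min_le_left (f x) (f y) :)
      (min_le_right (f x) (f y) :) hz

lemma upperSemicontinuous_s10 (hf : QuasiConcave f) : UpperSemicontinuous f := by
  refine upperSemicontinuous_iff_isClosed_preimage.2 fun t => ?_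
  rcases le_or_gt t 0 with ht | ht
  · have : f ⁻¹' Ici t = univ := eq_univ_of_forall fun x => ht.trans (hf.1 x)
    rw [this]
    exact isClosed_univ
  · exact (hf.isCompact_setOf_le_s10 ht).isClosed

lemma exists_forall_le (hf : QuasiConcave f) : ∃ x₀, ∀ x, f x ≤ f x₀ := by
  by_cases hpos : ∃ x₁, 0 < f x₁
  · obtain ⟨x₁, hx₁⟩ := hpos
    obtain ⟨x₀, -, hx₀⟩ := (hf.upperSemicontinuous_s10.upperSemicontinuousOn _).exists_isMaxOn
      ⟨x₁, le_refl (f x₁)⟩ (hf.isCompact_setOf_le_s10 hx₁)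
    refine ⟨x₀, fun x => ?_⟩
    by_cases hx : f x₁ ≤ f x
    · exact hx₀ hx
    · exact (not_le.1 hx).le.trans (hx₀ (le_refl (f x₁)))
  · simp only [not_exists, not_lt] at hpos
    exact ⟨0, fun x => (hpos x).trans (hf.1 0)⟩

lemma tendsto_cocompact (hf : QuasiConcave f) : Tendsto f (cocompact _) (𝓝 0) := by
  refine Metric.tendsto_nhds.2 fun ε hε => ?_
  filter_upwards [(hf.isCompact_setOf_le_s10 hε).compl_mem_cocompact] with x hx
  rw [Real.dist_eq, sub_zero, abs_of_nonneg (hf.1 x)]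
  exact not_le.1 hx

lemma apply_smul_le_apply_smul (hf : QuasiConcave f) (hmax : ∀ x, f x ≤ f 0) {a b : ℝ}
    (ha : 0 ≤ a) (hab : a ≤ b) (x : EucN N) : f (b • x) ≤ f (a • x) := by
  rcases (ha.trans hab).eq_or_lt with hb | hb
  · rw [← hb, le_antisymm (hb ▸ hab) ha]
  have hmem : a • x ∈ segment ℝ 0 (b • x) := by
    refine ⟨1 - a / b, a / b, by linarith [div_le_one_of_le₀ hab hb.le], div_nonneg ha hb.le,
      by ring, ?_⟩
    rw [smul_zero, zero_add, smul_smul, div_mul_cancel₀ a hb.ne']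
  simpa [min_eq_right (hmax (b • x))] using hf.min_le_of_mem_segment hmem

lemma tendsto_apply_natCast_add_one_smul [DecidableEq (EucN N)] (hf : QuasiConcave f)
    (x : EucN N) :
    Tendsto (fun n : ℕ => f (((n : ℝ) + 1) • x)) atTop
      (𝓝 ((Pi.single 0 (f 0) : EucN N → ℝ) x)) := by
  rcases eq_or_ne x 0 with rfl | hx
  · simp
  rw [Pi.single_eq_of_ne hx]
  refine hf.tendsto_cocompact.comp ?_
  rw [← Metric.cobounded_eq_cocompact, ← tendsto_norm_atTop_iff_cobounded]
  have hn : Tendsto (fun n : ℕ => (n : ℝ) + 1) atTop atTop :=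
    tendsto_atTop_add_const_right _ 1 tendsto_natCast_atTop_atTop
  refine (hn.atTop_mul_const (norm_pos_iff.2 hx)).congr fun n => ?_
  rw [norm_smul, Real.norm_of_nonneg (by positivity)]

end QuasiConcave

section Valuation

variable {N : ℕ} {μ : (EucN N → ℝ) → ℝ} [DecidableEq (EucN N)]

lemma map_eq_map_single_of_forall_le_apply_zero (hcont : ContinuousVal μ) (hhom : HomogVal 0 μ)
    {f : EucN N → ℝ} (hf : QuasiConcave f) (hmax : ∀ x, f x ≤ f 0) :
    μ f = μ (Pi.single 0 (f 0)) := by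
  set F : ℕ → EucN N → ℝ := fun n x => f (((n : ℝ) + 1) • x)
  have hF : ∀ n, μ (F n) = μ f := fun n => by
    simpa using hhom f hf ((n : ℝ) + 1)⁻¹ (by positivity)
  have hFqc : ∀ n, QuasiConcave (F n) := fun n =>
    hf.comp_affineEquiv (LinearEquiv.smulOfNeZero ℝ _ _ (Nat.cast_add_one_ne_zero n)).toAffineEquiv
  have hanti : ∀ x, Antitone fun n => F n x := fun x m n hmn =>
    hf.apply_smul_le_apply_smul hmax (by positivity) (by gcongr) x
  have hlim := hcont F _ hFqc (quasiConcave_single 0 (hf.1 0)) (Or.inr hanti)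
    hf.tendsto_apply_natCast_add_one_smul
  simp only [hF] at hlim
  exact tendsto_nhds_unique tendsto_const_nhds hlim

lemma map_eq_map_single_of_forall_le (hcont : ContinuousVal μ) (htrans : TransInvVal μ)
    (hhom : HomogVal 0 μ) {f : EucN N → ℝ} (hf : QuasiConcave f) {x₀ : EucN N}
    (hmax : ∀ x, f x ≤ f x₀) : μ f = μ (Pi.single 0 (f x₀)) := by
  set g : EucN N → ℝ := fun x => f (x₀ + x)
  have hg : QuasiConcave g := hf.comp_affineEquiv (AffineEquiv.constVAdd ℝ _ x₀)
  have hμg : μ g = μ f := by simpa [g] using (htrans g hg x₀).symm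
  rw [← hμg, map_eq_map_single_of_forall_le_apply_zero hcont hhom hg
    (fun x => by simpa [g] using hmax (x₀ + x))]
  simp [g]

end Valuation

lemma continuous_map_single_max {N : ℕ} {μ : (EucN N → ℝ) → ℝ} [DecidableEq (EucN N)]
    (hcont : ContinuousVal μ) : Continuous fun t : ℝ => μ (Pi.single 0 (max t 0)) := by
  have hsingle : Monotone fun t : ℝ => (Pi.single 0 (max t 0) : EucN N → ℝ) :=
    (Pi.single_mono 0).comp (monotone_id.max monotone_const)
  refine continuous_of_tendsto_comp_of_monotone_or_antitone fun u hu t ht =>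
    hcont _ _ (fun _ => quasiConcave_single 0 (le_max_right _ _))
      (quasiConcave_single 0 (le_max_right _ _)) ?_ fun x => ?_
  · rcases hu with hu | hu
    · exact Or.inl fun x m n hmn => hsingle (hu hmn) x
    · exact Or.inr fun x m n hmn => hsingle (hu hmn) x
  · have hcont_single : Continuous fun t : ℝ => (Pi.single 0 (max t 0) : EucN N → ℝ) :=
      (continuous_single 0).comp (continuous_id.max continuous_const)
    exact tendsto_pi_nhds.1 ((hcont_single.tendsto t).comp ht) x

/-- Every continuous, translation invariant, `0`-homogeneous valuation on
`C^N` is of the form `μ(f) = φ(max f)` for a continuous function `φ : [0,∞) → ℝ` with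
`φ(0) = 0`. -/
theorem zero_homogeneous_characterization {N : ℕ} (μ : (EucN N → ℝ) → ℝ)
    (hval : IsValuationQC μ) (hcont : ContinuousVal μ) (htrans : TransInvVal μ)
    (hhom : HomogVal 0 μ) :
    ∃ φ : ℝ → ℝ, ContinuousOn φ (Set.Ici 0) ∧ φ 0 = 0 ∧
      ∀ f : EucN N → ℝ, QuasiConcave f → μ f = φ (⨆ x : EucN N, f x) := by
  classical
  -- `max t 0` keeps every height admissible, which makes `φ` continuous on all of `ℝ`.
  refine ⟨fun t => μ (Pi.single 0 (max t 0)), (continuous_map_single_max hcont).continuousOn,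
    by simpa using hval.1, fun f hf => ?_⟩
  obtain ⟨x₀, hmax⟩ := hf.exists_forall_le
  have hsup : (⨆ x, f x) = f x₀ :=
    ciSup_eq_of_forall_le_of_forall_lt_exists_gt hmax fun _ hw => ⟨x₀, hw⟩
  simp only [hsup, max_eq_left (hf.1 x₀)]
  exact map_eq_map_single_of_forall_le hcont htrans hhom hf hmax
end
end

section
/- Let μ : C^N → ℝ be a continuous and translation invariant valuation on the space C^N of quasi-concave functions, and fix t > 0. Define μ̃_t : K^N → ℝ by μ̃_t(K) = μ(t·I_K). Then μ̃_t is a translation invariant valuation on the space K^N of convex bodies, and it is continuous with respect to decreasing sequences: μ̃_t(K_i) → μ̃_t(K) whenever K_i is a decreasing sequence of convex bodies converging to K in the Hausdorff metric. -/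
/-! For `t ≥ 0` the map `K ↦ t·I_K` turns unions and intersections of convex bodies into pointwise
maxima and minima, and translates of `K` into translates of `t·I_K`, so the valuation property and
translation invariance pass from `μ` to `K ↦ μ(t·I_K)`. If convex bodies `K_i` decrease to `L` in
the Hausdorff metric, then `L = ⋂ i, K_i`, hence `t·I_{K_i}` decreases pointwise to `t·I_L` and
the continuity of `μ` applies. -/

open Filter Set MeasureTheory Metric
open scoped Topology Pointwise ENNReal NNReal

noncomputable section

namespace Set

variable {α M : Type*}

theorem indicator_sup_indicator [Lattice M] [Zero M] {f : α → M} (hf : 0 ≤ f) (s t : Set α) :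
    s.indicator f ⊔ t.indicator f = (s ∪ t).indicator f := by
  funext x
  have hfx : 0 ≤ f x := hf x
  by_cases hs : x ∈ s <;> by_cases ht : x ∈ t <;> simp [hs, ht, hfx]

theorem indicator_inf_indicator [Lattice M] [Zero M] {f : α → M} (hf : 0 ≤ f) (s t : Set α) :
    s.indicator f ⊓ t.indicator f = (s ∩ t).indicator f := by
  funext x
  have hfx : 0 ≤ f x := hf x
  by_cases hs : x ∈ s <;> by_cases ht : x ∈ t <;> simp [hs, ht, hfx]

theorem indicator_const_image_add_right [AddGroup α] [Zero M] (s : Set α) (a : α) (c : M) :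
    ((fun x => x + a) '' s).indicator (fun _ => c) =
      fun x => s.indicator (fun _ => c) (x - a) := by
  funext x
  by_cases hx : x - a ∈ s <;> simp [image_add_right, ← sub_eq_add_neg, hx]

end Set

section HausdorffLimit

variable {α : Type*} [PseudoMetricSpace α] {K : ℕ → Set α} {L : Set α}

theorem subset_of_antitone_of_tendsto_hausdorffDist (hK : Antitone K)
    (hKc : ∀ i, IsClosed (K i)) (hKne : ∀ i, (K i).Nonempty)
    (hfin : ∀ i, hausdorffEDist L (K i) ≠ ⊤)
    (hlim : Tendsto (fun i => hausdorffDist (K i) L) atTop (𝓝 0)) (i : ℕ) : L ⊆ K i := by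
  intro x hx
  rw [(hKc i).mem_iff_infDist_zero (hKne i)]
  refine le_antisymm (ge_of_tendsto hlim ?_) infDist_nonneg
  filter_upwards [eventually_ge_atTop i] with j hj
  calc infDist x (K i) ≤ infDist x (K j) := infDist_le_infDist_of_subset (hK hj) (hKne j)
    _ ≤ hausdorffDist L (K j) := infDist_le_hausdorffDist_of_mem hx (hfin j)
    _ = hausdorffDist (K j) L := hausdorffDist_comm

theorem iInter_subset_of_tendsto_hausdorffDist (hLc : IsClosed L) (hLne : L.Nonempty)
    (hfin : ∀ i, hausdorffEDist (K i) L ≠ ⊤)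
    (hlim : Tendsto (fun i => hausdorffDist (K i) L) atTop (𝓝 0)) : ⋂ i, K i ⊆ L := by
  intro x hx
  rw [hLc.mem_iff_infDist_zero hLne]
  refine le_antisymm (ge_of_tendsto hlim (Eventually.of_forall fun i => ?_)) infDist_nonneg
  exact infDist_le_hausdorffDist_of_mem (mem_iInter.mp hx i) (hfin i)

theorem iInter_eq_of_antitone_of_tendsto_hausdorffDist (hK : Antitone K)
    (hKc : ∀ i, IsClosed (K i)) (hKne : ∀ i, (K i).Nonempty) (hLc : IsClosed L)
    (hLne : L.Nonempty) (hfin : ∀ i, hausdorffEDist (K i) L ≠ ⊤)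
    (hlim : Tendsto (fun i => hausdorffDist (K i) L) atTop (𝓝 0)) : ⋂ i, K i = L :=
  (iInter_subset_of_tendsto_hausdorffDist hLc hLne hfin hlim).antisymm <|
    subset_iInter <| subset_of_antitone_of_tendsto_hausdorffDist hK hKc hKne
      (fun i => by rw [hausdorffEDist_comm]; exact hfin i) hlim

end HausdorffLimit

theorem quasiConcave_indicator {N : ℕ} {K : Set (EucN N)} (hKc : IsCompact K)
    (hKv : Convex ℝ K) {t : ℝ} (ht : 0 ≤ t) : QuasiConcave (K.indicator fun _ => t) := by
  refine ⟨fun x => indicator_nonneg (fun _ _ => ht) x, fun s hs => ?_⟩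
  by_cases hst : s ≤ t
  · have hlevel : {x | s ≤ K.indicator (fun _ => t) x} = K := by
      ext x
      by_cases hx : x ∈ K <;> simp [hx, hst, not_le.mpr hs]
    rw [hlevel]
    exact Or.inr ⟨hKc, hKv⟩
  · refine Or.inl (eq_empty_of_forall_notMem fun x hx => hst ?_)
    by_cases hxK : x ∈ K <;> simp_all [not_le.mpr hs]

section ValuationOnBodies

variable {N : ℕ} {μ : (EucN N → ℝ) → ℝ} {t : ℝ}

theorem IsValuationQC.isValuationBody_indicator (hval : IsValuationQC μ) (ht : 0 ≤ t) :
    IsValuationBody (fun K : Set (EucN N) => μ (K.indicator fun _ => t)) := by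
  have hnonneg : (0 : EucN N → ℝ) ≤ fun _ => t := fun _ => ht
  refine ⟨(congrArg μ (indicator_empty _)).trans hval.1, fun K L hK hL hKL => ?_⟩
  have hsup := Set.indicator_sup_indicator hnonneg K L
  have hmodular := hval.2 _ _ (quasiConcave_indicator hK.2.1 hK.2.2 ht)
    (quasiConcave_indicator hL.2.1 hL.2.2 ht)
    (hsup ▸ quasiConcave_indicator hKL.2.1 hKL.2.2 ht)
  rwa [hsup, Set.indicator_inf_indicator hnonneg] at hmodular

theorem TransInvVal.indicator_image_add (htrans : TransInvVal μ) {K : Set (EucN N)}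
    (hK : IsCompact K) (hKv : Convex ℝ K) (ht : 0 ≤ t) (x₀ : EucN N) :
    μ (((fun x => x + x₀) '' K).indicator fun _ => t) = μ (K.indicator fun _ => t) := by
  rw [Set.indicator_const_image_add_right]
  exact htrans _ (quasiConcave_indicator hK hKv ht) x₀

theorem ContinuousVal.tendsto_indicator_iInter (hcont : ContinuousVal μ)
    {K : ℕ → Set (EucN N)} (hK : Antitone K) (hKc : ∀ i, IsCompact (K i))
    (hKv : ∀ i, Convex ℝ (K i)) (ht : 0 ≤ t) :
    Tendsto (fun i => μ ((K i).indicator fun _ => t)) atTop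
      (𝓝 (μ ((⋂ i, K i).indicator fun _ => t))) := by
  have hcompact : IsCompact (⋂ i, K i) :=
    (hKc 0).of_isClosed_subset (isClosed_iInter fun i => (hKc i).isClosed) (iInter_subset K 0)
  refine hcont _ _ (fun i => quasiConcave_indicator (hKc i) (hKv i) ht)
    (quasiConcave_indicator hcompact (convex_iInter hKv) ht) (Or.inr ?_) ?_
  · exact fun x i j hij => Set.indicator_le_indicator_of_subset (hK hij) (fun _ => ht) x
  · exact fun x => (hK.tendsto_indicator K _ x).mono_right (pure_le_nhds _)

end ValuationOnBodies

/-- Remark 4.5. For a continuous, translation invariant valuation `μ` on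
`C^N` and `t > 0`, the functional `K ↦ μ(t·I_K)` is a translation invariant valuation on `K^N`
which is continuous along decreasing sequences of convex bodies. -/
theorem induced_body_valuation {N : ℕ} (μ : (EucN N → ℝ) → ℝ)
    (hval : IsValuationQC μ) (hcont : ContinuousVal μ) (htrans : TransInvVal μ)
    (t : ℝ) (ht : 0 < t) :
    IsValuationBody (fun K : Set (EucN N) => μ (Set.indicator K fun _ => t)) ∧
    (∀ K : Set (EucN N), IsConvexBody K → ∀ x₀ : EucN N,
      μ (Set.indicator ((fun x => x + x₀) '' K) fun _ => t) =
        μ (Set.indicator K fun _ => t)) ∧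
    ∀ (K : ℕ → Set (EucN N)) (L : Set (EucN N)),
      (∀ i, IsConvexBody (K i)) → IsConvexBody L → (∀ i, K (i + 1) ⊆ K i) →
      Tendsto (fun i => hausdorffDist (K i) L) atTop (𝓝 0) →
      Tendsto (fun i => μ (Set.indicator (K i) fun _ => t)) atTop
        (𝓝 (μ (Set.indicator L fun _ => t))) := by
  refine ⟨hval.isValuationBody_indicator ht.le,
    fun K hK x₀ => htrans.indicator_image_add hK.2.1 hK.2.2 ht.le x₀,
    fun K L hK hL hdec hlim => ?_⟩
  have hanti : Antitone K := antitone_nat_of_succ_le hdec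
  have hfin : ∀ i, hausdorffEDist (K i) L ≠ ⊤ := fun i =>
    hausdorffEDist_ne_top_of_nonempty_of_bounded (hK i).1 hL.1 (hK i).2.1.isBounded
      hL.2.1.isBounded
  rw [← iInter_eq_of_antitone_of_tendsto_hausdorffDist hanti (fun i => (hK i).2.1.isClosed)
    (fun i => (hK i).1) hL.2.1.isClosed hL.1 hfin hlim]
  exact hcont.tendsto_indicator_iInter hanti (fun i => (hK i).2.1) (fun i => (hK i).2.2) ht.le
end
end

section
/- Let μ : C^N → ℝ be a continuous valuation on the space C^N of quasi-concave functions and let c : (0,∞) → ℝ be such that μ(t·I_K) = c(t)·Vol_N(K) for every t > 0 and every convex body K. Then for every simple function f = t_1·I_{K_1} ∨ ⋯ ∨ t_m·I_{K_m}, where 0 < t_1 < ⋯ < t_m and K_1 ⊃ K_2 ⊃ ⋯ ⊃ K_m are convex bodies, one has μ(f) = Σ_{i=1}^{m−1} c(t_i)·(Vol_N(K_i) − Vol_N(K_{i+1})) + c(t_m)·Vol_N(K_m). -/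
/-!
Split a simple function as `f = f' ∨ t_m·I_{K_m}`, where `f'` is built from the first `m - 1`
levels. Because the bodies are nested and the heights increase, `f' ∧ t_m·I_{K_m}` is the
single indicator `t_{m-1}·I_{K_m}`, and all functions involved are quasi-concave (a super-level
set of a simple function over a chain of bodies is the largest body it reaches). The valuation
identity thus expresses `μ(f)` through `μ(f')` and two indicator values, and induction on `m`
telescopes into the formula.
-/

open Filter Set MeasureTheory Metric
open scoped Topology Pointwise ENNReal NNReal

noncomputable section

def simpleFun {N : ℕ} {ι : Type*} [Fintype ι] [Nonempty ι] (t : ι → ℝ)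
    (K : ι → Set (EucN N)) : EucN N → ℝ :=
  fun x => Finset.univ.sup' Finset.univ_nonempty fun i => (K i).indicator (fun _ => t i) x

section SimpleFun

variable {N : ℕ} {ι : Type*} [Fintype ι] [Nonempty ι] {t : ι → ℝ} {K : ι → Set (EucN N)}

lemma simpleFun_unique [Unique ι] (t : ι → ℝ) (K : ι → Set (EucN N)) :
    simpleFun t K = (K default).indicator fun _ => t default := by
  funext x
  simp [simpleFun, Finset.univ_unique]

lemma simpleFun_apply_of_forall_mem {x : EucN N} (hx : ∀ i, x ∈ K i) :
    simpleFun t K x = Finset.univ.sup' Finset.univ_nonempty t := by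
  simp [simpleFun, Set.indicator_of_mem (hx _)]

lemma simpleFun_nonneg (ht : ∀ i, 0 ≤ t i) (x : EucN N) : 0 ≤ simpleFun t K x :=
  let i := Classical.arbitrary ι
  (Set.indicator_nonneg (fun _ _ => ht i) x).trans
    (Finset.le_sup' (fun i => (K i).indicator (fun _ => t i) x) (Finset.mem_univ i))

lemma setOf_le_simpleFun {s : ℝ} (hs : 0 < s) :
    {x | s ≤ simpleFun t K x} = ⋃ (i) (_ : s ≤ t i), K i := by
  ext x
  simp only [simpleFun, Set.mem_ofPred_eq, Finset.le_sup'_iff, Finset.mem_univ, true_and,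
    Set.mem_iUnion, exists_prop]
  refine exists_congr fun i => ?_
  by_cases hx : x ∈ K i <;> simp [hx, hs.not_ge]

lemma quasiConcave_simpleFun [LinearOrder ι] (ht : ∀ i, 0 ≤ t i)
    (hK : ∀ i, IsConvexBody (K i)) (hKanti : Antitone K) : QuasiConcave (simpleFun t K) := by
  refine ⟨simpleFun_nonneg ht, fun s hs => ?_⟩
  rw [setOf_le_simpleFun hs]
  by_cases h : ∃ i, s ≤ t i
  · right
    obtain ⟨i₀, hi₀, hmin⟩ := (Set.toFinite {i | s ≤ t i}).exists_minimal h
    suffices ⋃ (i) (_ : s ≤ t i), K i = K i₀ by rw [this]; exact (hK i₀).2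
    refine (Set.iUnion₂_subset fun i hi => hKanti ?_).antisymm
      fun x hx => Set.mem_iUnion₂.2 ⟨i₀, hi₀, hx⟩
    exact not_lt.mp fun hlt => not_le_of_gt hlt (hmin hi hlt.le)
  · left
    push Not at h
    simp [fun i => (h i).not_ge]

lemma quasiConcave_indicator_s13 {L : Set (EucN N)} (hL : IsConvexBody L) {a : ℝ} (ha : 0 ≤ a) :
    QuasiConcave (L.indicator fun _ => a) := by
  simpa [simpleFun_unique] using
    quasiConcave_simpleFun (ι := Unit) (fun _ => ha) (fun _ => hL) antitone_const

end SimpleFun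

section InitLast

variable {N n : ℕ} {t : Fin (n + 2) → ℝ} {K : Fin (n + 2) → Set (EucN N)}

lemma simpleFun_eq_init_sup_last (t : Fin (n + 2) → ℝ) (K : Fin (n + 2) → Set (EucN N)) :
    simpleFun t K = simpleFun (Fin.init t) (Fin.init K) ⊔
      (K (Fin.last _)).indicator fun _ => t (Fin.last _) := by
  funext x
  refine eq_of_forall_ge_iff fun a => ?_
  simp [simpleFun, Finset.sup'_le_iff, Fin.forall_fin_succ', Fin.init]

lemma simpleFun_init_inf_last (ht : Monotone t) (ht0 : 0 ≤ t 0) (hKanti : Antitone K) :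
    simpleFun (Fin.init t) (Fin.init K) ⊓
        (K (Fin.last _)).indicator (fun _ => t (Fin.last _)) =
      (K (Fin.last _)).indicator fun _ => t (Fin.last n).castSucc := by
  funext x
  by_cases hx : x ∈ K (Fin.last _)
  · have hx' : ∀ i, x ∈ (Fin.init K) i := fun i => hKanti (Fin.castSucc_lt_last i).le hx
    have hsup : Finset.univ.sup' Finset.univ_nonempty (Fin.init t) = t (Fin.last n).castSucc :=
      le_antisymm
        (Finset.sup'_le _ _ fun i _ => ht (Fin.castSucc_le_castSucc_iff.2 (Fin.le_last i)))
        (Finset.le_sup' (Fin.init t) (Finset.mem_univ _))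
    rw [Pi.inf_apply, simpleFun_apply_of_forall_mem hx', hsup]
    simp [hx, ht (Fin.castSucc_lt_last _).le]
  · have hnonneg : ∀ i, 0 ≤ (Fin.init t) i := fun i => ht0.trans (ht (Fin.zero_le _))
    simp [hx, simpleFun_nonneg hnonneg]

end InitLast

lemma IsValuationQC.apply_simpleFun_succ {N n : ℕ} {μ : (EucN N → ℝ) → ℝ}
    (hμ : IsValuationQC μ)
    {t : Fin (n + 2) → ℝ} {K : Fin (n + 2) → Set (EucN N)} (ht : Monotone t) (ht0 : 0 ≤ t 0)
    (hK : ∀ i, IsConvexBody (K i)) (hKanti : Antitone K) :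
    μ (simpleFun t K) = μ (simpleFun (Fin.init t) (Fin.init K)) +
      μ ((K (Fin.last _)).indicator fun _ => t (Fin.last _)) -
      μ ((K (Fin.last _)).indicator fun _ => t (Fin.last n).castSucc) := by
  have hnonneg : ∀ i, 0 ≤ t i := fun i => ht0.trans (ht (Fin.zero_le i))
  have hval := hμ.2 (simpleFun (Fin.init t) (Fin.init K))
    ((K (Fin.last _)).indicator fun _ => t (Fin.last _))
    (quasiConcave_simpleFun (fun _ => hnonneg _) (fun _ => hK _)
      (hKanti.comp_monotone Fin.strictMono_castSucc.monotone))
    (quasiConcave_indicator_s13 (hK _) (hnonneg _))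
    (by rw [← simpleFun_eq_init_sup_last]; exact quasiConcave_simpleFun hnonneg hK hKanti)
  rw [← simpleFun_eq_init_sup_last, simpleFun_init_inf_last ht ht0 hKanti] at hval
  linarith

theorem IsValuationQC.apply_simpleFun {N : ℕ} {μ : (EucN N → ℝ) → ℝ} (hμ : IsValuationQC μ)
    {c : ℝ → ℝ} (hc : ∀ t : ℝ, 0 < t → ∀ K : Set (EucN N), IsConvexBody K →
      μ (Set.indicator K fun _ => t) = c t * (volume K).toReal)
    {m : ℕ} {t : Fin (m + 1) → ℝ} {K : Fin (m + 1) → Set (EucN N)} (ht : Monotone t)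
    (ht0 : 0 < t 0) (hK : ∀ i, IsConvexBody (K i)) (hKanti : Antitone K) :
    μ (simpleFun t K) =
      (∑ i : Fin m,
          c (t i.castSucc) * ((volume (K i.castSucc)).toReal - (volume (K i.succ)).toReal)) +
        c (t (Fin.last m)) * (volume (K (Fin.last m))).toReal := by
  induction m with
  | zero => simpa [simpleFun_unique] using hc _ ht0 _ (hK 0)
  | succ m ih =>
    have ht_pos : ∀ i, 0 < t i := fun i => ht0.trans_le (ht (Fin.zero_le i))
    rw [hμ.apply_simpleFun_succ ht ht0.le hK hKanti,
      ih (t := Fin.init t) (K := Fin.init K) (ht.comp Fin.strictMono_castSucc.monotone) ht0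
        (fun _ => hK _) (hKanti.comp_monotone Fin.strictMono_castSucc.monotone),
      hc _ (ht_pos _) _ (hK _), hc _ (ht_pos _) _ (hK _), Fin.sum_univ_castSucc]
    simp only [Fin.init, Fin.succ_castSucc, Fin.succ_last]
    ring

theorem valuation_on_simple_functions_general {N : ℕ} (μ : (EucN N → ℝ) → ℝ)
    (hval : IsValuationQC μ) (c : ℝ → ℝ)
    (hc : ∀ t : ℝ, 0 < t → ∀ K : Set (EucN N), IsConvexBody K →
      μ (Set.indicator K fun _ => t) = c t * (volume K).toReal)
    (m : ℕ) (t : Fin (m + 1) → ℝ) (K : Fin (m + 1) → Set (EucN N))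
    (ht0 : 0 < t 0) (htmono : StrictMono t)
    (hK : ∀ i, IsConvexBody (K i))
    (hKchain : ∀ i j : Fin (m + 1), i < j → K j ⊂ K i) :
    μ (fun x => Finset.univ.sup' Finset.univ_nonempty
        fun i : Fin (m + 1) => Set.indicator (K i) (fun _ => t i) x) =
      (∑ i : Fin m,
          c (t i.castSucc) * ((volume (K i.castSucc)).toReal - (volume (K i.succ)).toReal)) +
        c (t (Fin.last m)) * (volume (K (Fin.last m))).toReal := by
  have hKanti : Antitone K := fun i j hij => hij.eq_or_lt.elim (fun h => h ▸ subset_rfl)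
    fun h => (hKchain i j h).subset
  exact hval.apply_simpleFun hc htmono.monotone ht0 hK hKanti

/-- If a continuous valuation `μ` on `C^N` satisfies
`μ(t·I_K) = c(t)·Vol_N(K)` for all `t > 0` and all convex bodies `K`, then for every simple
function `f = t_1·I_{K_1} ∨ ⋯ ∨ t_m·I_{K_m}` (with `0 < t_1 < ⋯ < t_m` and
`K_1 ⊃ ⋯ ⊃ K_m`) one has
`μ(f) = Σ_{i=1}^{m-1} c(t_i)(Vol_N(K_i) − Vol_N(K_{i+1})) + c(t_m) Vol_N(K_m)`. -/
theorem valuation_on_simple_functions {N : ℕ} (μ : (EucN N → ℝ) → ℝ)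
    (hval : IsValuationQC μ) (hcont : ContinuousVal μ) (c : ℝ → ℝ)
    (hc : ∀ t : ℝ, 0 < t → ∀ K : Set (EucN N), IsConvexBody K →
      μ (Set.indicator K fun _ => t) = c t * (volume K).toReal)
    (m : ℕ) (t : Fin (m + 1) → ℝ) (K : Fin (m + 1) → Set (EucN N))
    (ht0 : 0 < t 0) (htmono : StrictMono t)
    (hK : ∀ i, IsConvexBody (K i))
    (hKchain : ∀ i j : Fin (m + 1), i < j → K j ⊂ K i) :
    μ (fun x => Finset.univ.sup' Finset.univ_nonempty
        fun i : Fin (m + 1) => Set.indicator (K i) (fun _ => t i) x) =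
      (∑ i : Fin m,
          c (t i.castSucc) * ((volume (K i.castSucc)).toReal - (volume (K i.succ)).toReal)) +
        c (t (Fin.last m)) * (volume (K (Fin.last m))).toReal :=
  valuation_on_simple_functions_general μ hval c hc m t K ht0 htmono hK hKchain
end
end
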